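/- arXiv:math/0309376 — 8 statements merged into one kernel-verified Lean document; each statement's English description precedes it below -/
import Mathlib

section
/- The de Rham differential Q is an odd derivation of the algebra of forms: for every x ∈ P that is homogeneous of Grassmann parity p (i.e. x lies in the image of MvPolynomial (Fin n) ℝ ⊗ (evenOdd p submodule of Λ)) and every z ∈ P, one has Q(x * z) = Q(x) * z + (-1)^p · x * Q(z). -/
open TensorProduct

noncomputable section

/-- The Grassmann algebra on `n` odd generators `ξ^α`. -/
abbrev Lam (n : ℕ) : Type := ExteriorAlgebra ℝ (Fin n → ℝ)

/-- The odd coordinate `ξ^α`, i.e. the generator `e_α = ι (Pi.single α 1)`. -/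
def gen {n : ℕ} (α : Fin n) : Lam n := ExteriorAlgebra.ι ℝ (Pi.single α 1)

/-- The odd partial derivative `∂/∂ξ^α`: left contraction with the `α`-th
coordinate functional, the unique antiderivation sending `e_β` to `δ_{αβ}`. -/
def pd {n : ℕ} (α : Fin n) : Lam n →ₗ[ℝ] Lam n :=
  CliffordAlgebra.contractLeft (Q := (0 : QuadraticForm ℝ (Fin n → ℝ))) (LinearMap.proj α)

/-- The algebra of (pseudo)differential forms on `ℝ^{0|n}`:
polynomials in the even fiber coordinates `y^α` with Grassmann coefficients. -/
abbrev Forms (n : ℕ) : Type := MvPolynomial (Fin n) ℝ ⊗[ℝ] Lam n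

/-- The de Rham differential `Q = y^α ∂_{ξ^α}`. -/
def deRham (n : ℕ) : Forms n →ₗ[ℝ] Forms n :=
  ∑ α : Fin n, TensorProduct.map (LinearMap.mulLeft ℝ (MvPolynomial.X α)) (pd α)

/-!
Left contraction with a linear functional is a graded derivation of the Clifford algebra: on a
product of `k` generators it satisfies the Leibniz rule with sign `(-1)^k`, hence on the
parity-`p` part with sign `(-1)^p`. Since the even coordinates `y^α` commute with everything,
tensoring with left multiplication by `y^α` preserves this twisted Leibniz rule, and so does
summing over `α`.
-/

namespace CliffordAlgebra

variable {R M : Type*} [CommRing R] [AddCommGroup M] [Module R M] {Q : QuadraticForm R M}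

theorem contractLeft_mul_of_mem_range_ι_pow (d : Module.Dual R M) {k : ℕ} {x : CliffordAlgebra Q}
    (hx : x ∈ LinearMap.range (ι Q) ^ k) (w : CliffordAlgebra Q) :
    contractLeft d (x * w) = contractLeft d x * w + (-1 : R) ^ k • (x * contractLeft d w) := by
  induction hx using Submodule.pow_induction_on_left' with
  | algebraMap r =>
    simp [contractLeft_algebraMap_mul, contractLeft_algebraMap, Algebra.smul_def]
  | add x y _ _ _ hx hy =>
    simp only [add_mul, map_add, hx, hy, smul_add]
    abel
  | mem_mul m hm k x _ ih =>
    obtain ⟨v, rfl⟩ := hm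
    simp only [mul_assoc, contractLeft_ι_mul, ih, pow_succ, mul_add, sub_mul, mul_smul_comm,
      smul_mul_assoc, mul_neg_one, neg_smul]
    abel

theorem contractLeft_mul_of_mem_evenOdd (d : Module.Dual R M) (p : ZMod 2)
    {x : CliffordAlgebra Q} (hx : x ∈ evenOdd Q p) (w : CliffordAlgebra Q) :
    contractLeft d (x * w) =
      contractLeft d x * w + (-1 : R) ^ p.val • (x * contractLeft d w) := by
  induction hx using Submodule.iSup_induction' with
  | mem k x hx =>
    obtain ⟨k, rfl⟩ := k
    rw [contractLeft_mul_of_mem_range_ι_pow d hx, ZMod.val_natCast, ← neg_one_pow_eq_pow_mod_two]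
  | zero => simp
  | add x y _ _ hx hy =>
    simp only [add_mul, map_add, hx, hy, smul_add]
    abel

end CliffordAlgebra

namespace TensorProduct

variable {R A B : Type*} [CommSemiring R] [CommSemiring A] [Algebra R A] [Semiring B] [Algebra R B]

theorem map_mulLeft_tmul_mul (a : A) (D : B →ₗ[R] B) (s : R) (q : A) {m : B}
    (hD : ∀ w, D (m * w) = D m * w + s • (m * D w)) (z : A ⊗[R] B) :
    map (LinearMap.mulLeft R a) D (q ⊗ₜ m * z) =
      map (LinearMap.mulLeft R a) D (q ⊗ₜ m) * z +
        s • (q ⊗ₜ m * map (LinearMap.mulLeft R a) D z) := by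
  induction z using TensorProduct.induction_on with
  | zero => simp
  | add u v hu hv =>
    simp only [mul_add, map_add, hu, hv, smul_add]
    abel
  | tmul r w =>
    simp only [Algebra.TensorProduct.tmul_mul_tmul, map_tmul, LinearMap.mulLeft_apply, hD,
      tmul_add, tmul_smul, mul_left_comm a q r, mul_assoc]

end TensorProduct

theorem deRham_odd_derivation_general (n : ℕ) (p : ZMod 2) (x : Forms n)
    (hx : x ∈ LinearMap.range (TensorProduct.map
      (LinearMap.id : MvPolynomial (Fin n) ℝ →ₗ[ℝ] MvPolynomial (Fin n) ℝ)
      (CliffordAlgebra.evenOdd (0 : QuadraticForm ℝ (Fin n → ℝ)) p).subtype))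
    (z : Forms n) :
    deRham n (x * z) = deRham n x * z + (-1 : ℝ) ^ p.val • (x * deRham n z) := by
  obtain ⟨y, rfl⟩ := hx
  induction y using TensorProduct.induction_on with
  | zero => simp
  | add a b ha hb =>
    simp only [map_add, add_mul, ha, hb, smul_add]
    abel
  | tmul q m =>
    obtain ⟨m, hm⟩ := m
    simp only [deRham, map_tmul, LinearMap.id_coe, id_eq, Submodule.coe_subtype,
      LinearMap.sum_apply, Finset.sum_mul, Finset.mul_sum, Finset.smul_sum,
      ← Finset.sum_add_distrib]
    exact Finset.sum_congr rfl fun α _ => map_mulLeft_tmul_mul _ _ _ q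
      (CliffordAlgebra.contractLeft_mul_of_mem_evenOdd _ p hm) z

/-- The de Rham differential is an odd derivation: on a form `x` whose Grassmann factor
is homogeneous of parity `p`, `Q(x*z) = Q(x)*z + (-1)^p x * Q(z)`. -/
theorem deRham_odd_derivation (n : ℕ) (hn : 1 ≤ n) (p : ZMod 2) (x : Forms n)
    (hx : x ∈ LinearMap.range (TensorProduct.map
      (LinearMap.id : MvPolynomial (Fin n) ℝ →ₗ[ℝ] MvPolynomial (Fin n) ℝ)
      (CliffordAlgebra.evenOdd (0 : QuadraticForm ℝ (Fin n → ℝ)) p).subtype))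
    (z : Forms n) :
    deRham n (x * z) = deRham n x * z + (-1 : ℝ) ^ p.val • (x * deRham n z) :=
  deRham_odd_derivation_general n p x hx z
end
end

section
/- Odd integration by parts (odd Stokes theorem, pointwise form): let B : Λ → ℝ be the Berezin integral, i.e. the coefficient of the top basis element e_0 ∧ ⋯ ∧ e_{m-1} in the basis expansion of an element of Λ. Then for every α, every ω ∈ Λ homogeneous of Grassmann parity p, and every η ∈ Λ, one has B(∂_α(ω) * η) = (-1)^(p+1) · B(ω * ∂_α(η)). In particular B(∂_α(x)) = 0 for all x ∈ Λ. -/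
open TensorProduct

noncomputable section

/-! Contraction with a covector is an antiderivation twisted by the grade involution:
`∂_α (ω η) = ∂_α ω · η + (-1)^p ω · ∂_α η`. Hence both claims reduce to `B ∘ ∂_α = 0`.
By hypothesis `B x` depends only on the coefficient of `x` on the top monomial. Since `∂_α` maps
`⋀^(k+1)` into `⋀^k` and `⋀^(m+1) = 0`, no element `∂_α x` has a component in the top degree `m`. -/

namespace CliffordAlgebra
variable {R M : Type*} [CommRing R] [AddCommGroup M] [Module R M] {Q : QuadraticForm R M}
  (d : Module.Dual R M)

theorem contractLeft_mul (x y : CliffordAlgebra Q) :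
    contractLeft d (x * y) = contractLeft d x * y + involute x * contractLeft d y := by
  induction x using CliffordAlgebra.induction generalizing y with
  | algebraMap r =>
    simp [contractLeft_algebraMap_mul, contractLeft_algebraMap]
  | ι v =>
    simp [contractLeft_ι_mul, contractLeft_ι, involute_ι, Algebra.smul_def, sub_eq_add_neg]
  | mul a b iha ihb =>
    simp only [mul_assoc, iha, ihb, map_mul, mul_add, add_mul]
    abel
  | add a b iha ihb =>
    simp only [add_mul, map_add, iha, ihb]
    abel

end CliffordAlgebra

namespace ExteriorAlgebra
variable {R M : Type*} [CommRing R] [AddCommGroup M] [Module R M] (d : Module.Dual R M)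

theorem contractLeft_eq_zero_of_mem_exteriorPower_zero {x : ExteriorAlgebra R M}
    (hx : x ∈ ⋀[R]^0 M) : CliffordAlgebra.contractLeft d x = 0 := by
  rw [exteriorPower, pow_zero, Submodule.one_eq_range] at hx
  obtain ⟨r, rfl⟩ := hx
  exact CliffordAlgebra.contractLeft_algebraMap (Q := 0) d r

theorem contractLeft_mem_exteriorPower {n : ℕ} {x : ExteriorAlgebra R M}
    (hx : x ∈ ⋀[R]^(n + 1) M) : CliffordAlgebra.contractLeft d x ∈ ⋀[R]^n M := by
  induction n generalizing x with
  | zero =>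
    rw [exteriorPower, zero_add, pow_one] at hx
    obtain ⟨v, rfl⟩ := hx
    rw [CliffordAlgebra.contractLeft_ι, exteriorPower, pow_zero]
    exact Submodule.algebraMap_mem _
  | succ n ih =>
    rw [exteriorPower, pow_succ'] at hx
    induction hx using Submodule.mul_induction_on' with
    | mem_mul_mem a ha y hy =>
      obtain ⟨v, rfl⟩ := ha
      rw [CliffordAlgebra.contractLeft_ι_mul]
      refine sub_mem (Submodule.smul_mem _ _ hy) ?_
      rw [exteriorPower, pow_succ']
      exact Submodule.mul_mem_mul ⟨v, rfl⟩ (ih hy)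
    | add a _ b _ ha hb => rw [map_add]; exact add_mem ha hb

open Set.powersetCard in
theorem basis_repr_eq_zero_of_mem_exteriorPower {I : Type*} [LinearOrder I] (b : Module.Basis I R M)
    {n : ℕ} {x : ExteriorAlgebra R M} (hx : x ∈ ⋀[R]^n M) {s : Finset I} (hs : s.card ≠ n) :
    b.ExteriorAlgebra.repr x s = 0 := by
  rw [Module.Basis.ExteriorAlgebra, Module.Basis.repr_reindex_apply, prodEquiv_symm_apply]
  exact DirectSum.IsInternal.collectedBasis_repr_of_mem_ne _ _ (Ne.symm hs) hx

theorem exteriorPower_eq_bot_of_card_lt {I : Type*} [LinearOrder I] [Fintype I]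
    (b : Module.Basis I R M) {n : ℕ} (hn : Fintype.card I < n) : ⋀[R]^n M = ⊥ := by
  refine (Submodule.eq_bot_iff _).mpr fun x hx => b.ExteriorAlgebra.ext_elem fun s => ?_
  rw [map_zero, Finsupp.zero_apply]
  exact basis_repr_eq_zero_of_mem_exteriorPower b hx ((s.card_le_univ.trans_lt hn).ne)

theorem basis_repr_contractLeft_univ {I : Type*} [LinearOrder I] [Fintype I]
    (b : Module.Basis I R M) (x : ExteriorAlgebra R M) :
    b.ExteriorAlgebra.repr (CliffordAlgebra.contractLeft d x) Finset.univ = 0 := by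
  suffices ⊤ ≤ LinearMap.ker (b.ExteriorAlgebra.coord Finset.univ ∘ₗ CliffordAlgebra.contractLeft d)
    from this Submodule.mem_top
  rw [← CliffordAlgebra.iSup_ι_range_eq_top, iSup_le_iff]
  rintro (_ | n) x (hx : x ∈ ⋀[R]^_ M)
  · simp [contractLeft_eq_zero_of_mem_exteriorPower_zero d hx]
  · obtain rfl | hn := eq_or_ne n (Fintype.card I)
    · rw [exteriorPower_eq_bot_of_card_lt b (Nat.lt_add_one _), Submodule.mem_bot] at hx
      simp [hx]
    · exact basis_repr_eq_zero_of_mem_exteriorPower b (contractLeft_mem_exteriorPower d hx)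
        (by rw [Finset.card_univ]; exact hn.symm)

end ExteriorAlgebra

theorem Module.Basis.apply_eq_repr_mul_of_forall_ne {ι R M : Type*} [CommSemiring R]
    [AddCommMonoid M] [Module R M] (b : Module.Basis ι R M) (f : M →ₗ[R] R) (i : ι)
    (hf : ∀ j ≠ i, f (b j) = 0) (x : M) : f x = b.repr x i * f (b i) := by
  classical
  have : f = (b.coord i).smulRight (f (b i)) := b.ext fun j => by
    obtain rfl | hj := eq_or_ne j i
    · simp
    · simp [hf j hj, hj.symm]
  simpa using LinearMap.congr_fun this x

theorem basisFun_exteriorAlgebra_eq_prod_gen {m : ℕ} (s : Finset (Fin m)) :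
    (Pi.basisFun ℝ (Fin m)).ExteriorAlgebra s = ((s.sort (· ≤ ·)).map gen).prod := by
  rw [ExteriorAlgebra.basis_apply_ofCard _ rfl, ExteriorAlgebra.ιMulti_family,
    ExteriorAlgebra.ιMulti_apply, List.ofFn_eq_map,
    ← Finset.listMap_orderEmbOfFin_finRange s rfl, List.map_map]
  simp only [Set.powersetCard.ofFinEmbEquiv_symm_apply, Function.comp_apply, Pi.basisFun_apply]
  rfl

theorem berezin_integration_by_parts_general (m : ℕ)
    (B : Lam m →ₗ[ℝ] ℝ)
    (hBother : ∀ s : Finset (Fin m), s ≠ Finset.univ →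
      B (((s.sort (· ≤ ·)).map gen).prod) = 0)
    (α : Fin m) (p : ZMod 2) (ω : Lam m)
    (hω : ω ∈ CliffordAlgebra.evenOdd (0 : QuadraticForm ℝ (Fin m → ℝ)) p)
    (η : Lam m) :
    B (pd α ω * η) = (-1 : ℝ) ^ (p + 1).val * B (ω * pd α η) ∧
    ∀ x : Lam m, B (pd α x) = 0 := by
  have hstokes (x : Lam m) : B (pd α x) = 0 := by
    rw [(Pi.basisFun ℝ (Fin m)).ExteriorAlgebra.apply_eq_repr_mul_of_forall_ne B Finset.univ
      (fun s hs => by rw [basisFun_exteriorAlgebra_eq_prod_gen]; exact hBother s hs),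
      pd, ExteriorAlgebra.basis_repr_contractLeft_univ, zero_mul]
  refine ⟨?_, hstokes⟩
  have hleibniz : B (pd α ω * η) + B (CliffordAlgebra.involute ω * pd α η) = 0 := by
    rw [← map_add, pd, ← CliffordAlgebra.contractLeft_mul]
    exact hstokes (ω * η)
  obtain rfl | rfl := (by decide : ∀ q : ZMod 2, q = 0 ∨ q = 1) p
  · rw [CliffordAlgebra.involute_eq_of_mem_even hω] at hleibniz
    rw [show ((0 : ZMod 2) + 1).val = 1 from rfl, pow_one]
    linarith
  · rw [CliffordAlgebra.involute_eq_of_mem_odd hω, neg_mul, map_neg] at hleibniz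
    rw [show ((1 : ZMod 2) + 1).val = 0 from rfl, pow_zero]
    linarith

/-- Odd integration by parts (odd Stokes theorem, pointwise form): if `B` is the Berezin
integral on `Λ = ExteriorAlgebra ℝ (Fin m → ℝ)` — the linear functional reading off the
coefficient of the top basis monomial `e_0 ∧ ⋯ ∧ e_{m-1}` in the monomial-basis expansion,
i.e. `B` sends the top monomial to `1` and every other basis monomial to `0` — then for
`ω` of Grassmann parity `p`: `B(∂_α ω * η) = (-1)^(p+1) B(ω * ∂_α η)`; in particular
`B(∂_α x) = 0` for all `x`. -/
theorem berezin_integration_by_parts (m : ℕ) (hm : 1 ≤ m)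
    (B : Lam m →ₗ[ℝ] ℝ)
    (hBtop : B ((((Finset.univ : Finset (Fin m)).sort (· ≤ ·)).map gen).prod) = 1)
    (hBother : ∀ s : Finset (Fin m), s ≠ Finset.univ →
      B (((s.sort (· ≤ ·)).map gen).prod) = 0)
    (α : Fin m) (p : ZMod 2) (ω : Lam m)
    (hω : ω ∈ CliffordAlgebra.evenOdd (0 : QuadraticForm ℝ (Fin m → ℝ)) p)
    (η : Lam m) :
    B (pd α ω * η) = (-1 : ℝ) ^ (p + 1).val * B (ω * pd α η) ∧
    ∀ x : Lam m, B (pd α x) = 0 :=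
  berezin_integration_by_parts_general m B hBother α p ω hω η
end
end

section
/- Cartan's magic formula for an even vector field: let V : Fin n → Λ be a vector field on ℝ^{0|n} all of whose components V α are odd elements of Λ (so V is an even vector field). Then V_↑ ∘ Q + Q ∘ V_↑ = V^↑ as linear endomorphisms of P, where V_↑ := Σ_α (pderiv α) ⊗ (left multiplication by V α) is the inner product i_V and V^↑ := Σ_α id ⊗ ((left multiplication by V α) ∘ ∂_α) + Σ_{α,β} ((left multiplication by X β) ∘ pderiv α) ⊗ (left multiplication by ∂_β(V α)) is the Lie derivative L_V. -/
open TensorProduct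

noncomputable section

/-- The inner product `i_V = V^α ∂_{y^α}` of the vector field `V = V^α ∂_{ξ^α}`. -/
def innerProd {n : ℕ} (V : Fin n → Lam n) : Forms n →ₗ[ℝ] Forms n :=
  ∑ α : Fin n, TensorProduct.map (MvPolynomial.pderiv α).toLinearMap
    (LinearMap.mulLeft ℝ (V α))

/-- The Lie derivative `L_V = V^α ∂_{ξ^α} + Q(V^α) ∂_{y^α}` of an even vector field. -/
def lieDerEven {n : ℕ} (V : Fin n → Lam n) : Forms n →ₗ[ℝ] Forms n :=
  (∑ α : Fin n, TensorProduct.map LinearMap.id (LinearMap.mulLeft ℝ (V α) ∘ₗ pd α)) +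
  ∑ α : Fin n, ∑ β : Fin n, TensorProduct.map
    (LinearMap.mulLeft ℝ (MvPolynomial.X β) ∘ₗ (MvPolynomial.pderiv α).toLinearMap)
    (LinearMap.mulLeft ℝ (pd β (V α)))

lemma pd_mul_odd {n : ℕ} (β : Fin n) (x : Lam n)
    (hx : x ∈ CliffordAlgebra.evenOdd (0 : QuadraticForm ℝ (Fin n → ℝ)) 1) (w : Lam n) :
    pd β (x * w) = pd β x * w - x * pd β w := by
  induction x, hx using CliffordAlgebra.odd_induction with
  | ι v =>
    rw [pd, CliffordAlgebra.contractLeft_ι_mul, CliffordAlgebra.contractLeft_ι,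
      Algebra.smul_def]
  | add x y hx hy ihx ihy =>
    simp only [add_mul, map_add, ihx, ihy]
    abel
  | ι_mul_ι_mul m₁ m₂ x hx ih =>
    simp only [pd] at ih ⊢
    simp only [mul_assoc, CliffordAlgebra.contractLeft_ι_mul, ih, map_sub, map_smul,
      mul_sub, sub_mul, smul_sub, mul_smul_comm, smul_mul_assoc]
    abel

/-- Cartan's magic formula for an even vector field (all components odd in `Λ`):
`i_V ∘ Q + Q ∘ i_V = L_V`. -/
theorem cartan_magic_even (n : ℕ) (hn : 1 ≤ n) (V : Fin n → Lam n)
    (hV : ∀ α, V α ∈ CliffordAlgebra.evenOdd (0 : QuadraticForm ℝ (Fin n → ℝ)) 1) :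
    innerProd V ∘ₗ deRham n + deRham n ∘ₗ innerProd V = lieDerEven V := by
  apply TensorProduct.ext'
  intro p w
  simp only [LinearMap.add_apply, LinearMap.comp_apply, innerProd, deRham, lieDerEven,
    LinearMap.sum_apply, TensorProduct.map_tmul, map_sum, LinearMap.mulLeft_apply,
    Derivation.coeFn_coe, LinearMap.id_coe, id_eq, LinearMap.coe_comp,
    Function.comp_apply]
  simp only [Derivation.leibniz, MvPolynomial.pderiv_X, smul_eq_mul, Pi.single_apply,
    mul_ite, mul_one, mul_zero, pd_mul_odd _ _ (hV _), add_tmul, tmul_sub, ite_tmul,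
    Finset.sum_add_distrib, Finset.sum_sub_distrib, Finset.sum_ite_eq,
    Finset.mem_univ, if_true]
  rw [Finset.sum_comm (f := fun α β => (MvPolynomial.X β * (MvPolynomial.pderiv α) p) ⊗ₜ[ℝ] (V α * (pd β) w))]
  abel
end
end

section
/- Inner products supercommute: for vector fields V, W : Fin n → Λ on ℝ^{0|n} of Grassmann parities p and q respectively (i.e. all components V α lie in the evenOdd (p+1) part and all W α in the evenOdd (q+1) part of Λ), one has V_↑ ∘ W_↑ = (-1)^((p+1)(q+1)) · W_↑ ∘ V_↑ as linear endomorphisms of P; equivalently the supercommutator [V_↑, W_↑] vanishes. -/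
open TensorProduct

noncomputable section

/-! `V_↑ ∘ W_↑` is the sum over `α, β` of `∂_{y^α} ∂_{y^β} ⊗ (V α W β)·`. The partial derivatives
`∂_{y^α}` commute, and homogeneous elements of the Grassmann algebra supercommute,
`V α W β = (-1)^((p+1)(q+1)) W β V α`; relabelling the double sum gives the sign. -/

theorem ExteriorAlgebra.mul_eq_uzpow_smul_mul_of_mem_evenOdd {R M : Type*} [CommRing R]
    [AddCommGroup M] [Module R M] {i j : ZMod 2} {a b : ExteriorAlgebra R M}
    (ha : a ∈ CliffordAlgebra.evenOdd (0 : QuadraticForm R M) i)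
    (hb : b ∈ CliffordAlgebra.evenOdd (0 : QuadraticForm R M) j) :
    a * b = (-1 : ℤˣ) ^ (i * j) • (b * a) := by
  have h := CliffordAlgebra.map_mul_map_of_isOrtho_of_mem_evenOdd (.id _) (.id _)
    QuadraticMap.IsOrtho.all a b ha hb
  rwa [CliffordAlgebra.map_id, AlgHom.id_apply, AlgHom.id_apply, mul_comm j] at h

theorem neg_one_uzpow_smul {R M : Type*} [Ring R] [AddCommGroup M] [Module R M]
    (k : ZMod 2) (x : M) : (-1 : ℤˣ) ^ k • x = (-1 : R) ^ k.val • x := by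
  rw [← ZMod.natCast_zmod_val k, uzpow_natCast, ZMod.val_natCast_of_lt k.val_lt, Units.smul_def]
  push_cast
  rw [← Int.cast_smul_eq_zsmul R]
  push_cast
  rfl

theorem MvPolynomial.pderiv_pderiv_comm {σ R : Type*} [CommRing R] (i j : σ)
    (f : MvPolynomial σ R) : pderiv i (pderiv j f) = pderiv j (pderiv i f) := by
  -- the commutator of two derivations is a derivation, and this one kills every `X k`
  have h : ⁅pderiv i, pderiv j⁆ = (0 : Derivation R (MvPolynomial σ R) (MvPolynomial σ R)) :=
    derivation_ext fun k => by
      classical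
      rw [Derivation.commutator_apply, pderiv_X, pderiv_X]
      simp [Pi.single_apply, apply_ite]
  rw [← sub_eq_zero, ← Derivation.commutator_apply, h, Derivation.zero_apply]

theorem innerProd_comp_innerProd {n : ℕ} (V W : Fin n → Lam n) :
    innerProd V ∘ₗ innerProd W = ∑ α, ∑ β, TensorProduct.map
      ((MvPolynomial.pderiv α).toLinearMap ∘ₗ (MvPolynomial.pderiv β).toLinearMap)
      (LinearMap.mulLeft ℝ (V α * W β)) := by
  simp only [innerProd, ← Module.End.mul_eq_comp, Finset.sum_mul, Finset.mul_sum]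
  simp only [Module.End.mul_eq_comp, ← map_comp, LinearMap.mulLeft_mul]
  exact Finset.sum_comm

theorem innerProd_supercomm_general (n : ℕ) (p q : ZMod 2) (V W : Fin n → Lam n)
    (hV : ∀ α, V α ∈ CliffordAlgebra.evenOdd (0 : QuadraticForm ℝ (Fin n → ℝ)) (p + 1))
    (hW : ∀ α, W α ∈ CliffordAlgebra.evenOdd (0 : QuadraticForm ℝ (Fin n → ℝ)) (q + 1)) :
    innerProd V ∘ₗ innerProd W =
      (-1 : ℝ) ^ ((p + 1) * (q + 1)).val • (innerProd W ∘ₗ innerProd V) := by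
  have hD (α β : Fin n) :
      (MvPolynomial.pderiv α).toLinearMap ∘ₗ (MvPolynomial.pderiv β).toLinearMap =
        (MvPolynomial.pderiv (R := ℝ) β).toLinearMap ∘ₗ (MvPolynomial.pderiv α).toLinearMap :=
    LinearMap.ext (MvPolynomial.pderiv_pderiv_comm α β)
  have hL (α β : Fin n) : LinearMap.mulLeft ℝ (V α * W β) =
      (-1 : ℝ) ^ ((p + 1) * (q + 1)).val • LinearMap.mulLeft ℝ (W β * V α) := by
    rw [ExteriorAlgebra.mul_eq_uzpow_smul_mul_of_mem_evenOdd (hV α) (hW β),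
      neg_one_uzpow_smul (R := ℝ) (M := Lam n)]
    exact (LinearMap.mul ℝ (Lam n)).map_smul _ _
  rw [innerProd_comp_innerProd, innerProd_comp_innerProd, Finset.sum_comm]
  simp only [hD, hL, TensorProduct.map_smul_right, Finset.smul_sum]

/-- Inner products supercommute: for vector fields `V, W` of Grassmann parities `p, q`
(components of element parities `p+1, q+1`),
`V_↑ ∘ W_↑ = (-1)^((p+1)(q+1)) W_↑ ∘ V_↑`, i.e. the supercommutator `[V_↑, W_↑]` vanishes. -/
theorem innerProd_supercomm (n : ℕ) (hn : 1 ≤ n) (p q : ZMod 2) (V W : Fin n → Lam n)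
    (hV : ∀ α, V α ∈ CliffordAlgebra.evenOdd (0 : QuadraticForm ℝ (Fin n → ℝ)) (p + 1))
    (hW : ∀ α, W α ∈ CliffordAlgebra.evenOdd (0 : QuadraticForm ℝ (Fin n → ℝ)) (q + 1)) :
    innerProd V ∘ₗ innerProd W =
      (-1 : ℝ) ^ ((p + 1) * (q + 1)).val • (innerProd W ∘ₗ innerProd V) :=
  innerProd_supercomm_general n p q V W hV hW
end
end

section
/- Lie derivative acts on inner products by the commutator: let V, W : Fin n → Λ be vector fields on ℝ^{0|n} with all components V α, W α odd elements of Λ (so V, W are even vector fields), and define U : Fin n → Λ by U γ := Σ_β ( V β * ∂_β(W γ) − W β * ∂_β(V γ) ). Then V^↑ ∘ W_↑ − W_↑ ∘ V^↑ = U_↑ as linear endomorphisms of P. -/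
open TensorProduct

noncomputable section

/-!
The Lie derivative splits as `V^α ∂_{ξ^α}`, acting on the Grassmann factor only, plus
`Q(V^α) ∂_{y^α}`. Commuting the first part past `W_↑ = Σ_γ ∂_{y^γ} ⊗ W^γ` happens in `Λ`, where
left multiplication by the odd `W^γ` passes the odd derivation `V^α ∂_α` at the cost of
`V^α ∂_α(W^γ)`, because odd elements anticommute. For the second part the coefficients
`∂_β V^α` are even, hence central in `Λ`, so the commutator happens in the polynomial factor,
where `[y^β ∂_{y^α}, ∂_{y^γ}] = -δ^β_γ ∂_{y^α}` produces `-W^β ∂_β(V^α)`.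
-/

open CliffordAlgebra

namespace Ring

variable {A ι : Type*} [Ring A]

theorem add_lie (x y z : A) : ⁅x + y, z⁆ = ⁅x, z⁆ + ⁅y, z⁆ := by
  simp only [lie_def, add_mul, mul_add]
  abel

theorem sum_lie (s : Finset ι) (f : ι → A) (z : A) : ⁅∑ i ∈ s, f i, z⁆ = ∑ i ∈ s, ⁅f i, z⁆ := by
  simp only [lie_def, Finset.sum_mul, Finset.mul_sum, Finset.sum_sub_distrib]

theorem lie_sum (s : Finset ι) (z : A) (f : ι → A) : ⁅z, ∑ i ∈ s, f i⁆ = ∑ i ∈ s, ⁅z, f i⁆ := by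
  simp only [lie_def, Finset.sum_mul, Finset.mul_sum, Finset.sum_sub_distrib]

end Ring

namespace TensorProduct

variable {R M N : Type*} [CommRing R] [AddCommGroup M] [Module R M] [AddCommGroup N] [Module R N]

theorem lie_map_map_of_commute_right (f₁ f₂ : Module.End R M) {g₁ g₂ : Module.End R N}
    (hg : Commute g₁ g₂) : ⁅map f₁ g₁, map f₂ g₂⁆ = map ⁅f₁, f₂⁆ (g₁ * g₂) := by
  rw [Ring.lie_def, Ring.lie_def, ← TensorProduct.map_mul, ← TensorProduct.map_mul, hg.eq]
  ext x y
  simp [sub_tmul]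

theorem lie_map_map_of_commute_left {f₁ f₂ : Module.End R M} (hf : Commute f₁ f₂)
    (g₁ g₂ : Module.End R N) : ⁅map f₁ g₁, map f₂ g₂⁆ = map (f₁ * f₂) ⁅g₁, g₂⁆ := by
  rw [Ring.lie_def, Ring.lie_def, ← TensorProduct.map_mul, ← TensorProduct.map_mul, hf.eq]
  ext x y
  simp [tmul_sub]

end TensorProduct

namespace MvPolynomial

variable {R σ : Type*} [CommRing R]

theorem commute_pderiv (i j : σ) :
    Commute (pderiv (R := R) i).toLinearMap (pderiv j).toLinearMap := by
  classical
  have h : ⁅pderiv i, pderiv j⁆ = (0 : Derivation R (MvPolynomial σ R) (MvPolynomial σ R)) :=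
    derivation_ext fun k => by
      rw [Derivation.commutator_apply]
      simp [pderiv_X, Pi.single_apply, apply_ite]
  rw [commute_iff_lie_eq, ← Derivation.commutator_coe_linear_map, h]
  rfl

theorem lie_mulLeft_X_comp_pderiv_pderiv [DecidableEq σ] (i j k : σ) :
    ⁅LinearMap.mulLeft R (X k : MvPolynomial σ R) ∘ₗ (pderiv i).toLinearMap,
        (pderiv j).toLinearMap⁆ =
      if j = k then -(pderiv (R := R) i).toLinearMap else 0 := by
  refine LinearMap.ext fun p => ?_
  have h := LinearMap.congr_fun (commute_pderiv (R := R) i j).eq p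
  simp only [Module.End.mul_apply, Derivation.coeFn_coe] at h
  split_ifs with hjk
  · subst hjk
    simp [Ring.lie_def, h]
  · simp [Ring.lie_def, pderiv_X, hjk, h]

end MvPolynomial

namespace CliffordAlgebra

variable {R M : Type*} [CommRing R] [AddCommGroup M] [Module R M] {Q : QuadraticForm R M}
  (d : Module.Dual R M)

theorem contractLeft_mul_of_mem_evenOdd_one {w : CliffordAlgebra Q} (hw : w ∈ evenOdd Q 1)
    (x : CliffordAlgebra Q) :
    contractLeft d (w * x) = contractLeft d w * x - w * contractLeft d x := by
  induction w, hw using odd_induction with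
  | ι v => rw [contractLeft_ι_mul, contractLeft_ι, Algebra.smul_def]
  | add _ _ _ _ h₁ h₂ => rw [add_mul, map_add, h₁, h₂, map_add, add_mul, add_mul]; abel
  | ι_mul_ι_mul m₁ m₂ y _ h =>
    simp only [mul_assoc, contractLeft_ι_mul, h, mul_sub, sub_mul, smul_mul_assoc,
      mul_smul_comm]
    abel

theorem contractLeft_mem_evenOdd_zero {w : CliffordAlgebra Q} (hw : w ∈ evenOdd Q 1) :
    contractLeft d w ∈ evenOdd Q 0 := by
  induction w, hw using odd_induction with
  | ι v => rw [contractLeft_ι]; exact SetLike.algebraMap_mem_graded _ _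
  | add _ _ _ _ h₁ h₂ => rw [map_add]; exact add_mem h₁ h₂
  | ι_mul_ι_mul m₁ m₂ y hy h =>
    have odd_mul_odd {a b : CliffordAlgebra Q} (ha : a ∈ evenOdd Q 1) (hb : b ∈ evenOdd Q 1) :
        a * b ∈ evenOdd Q 0 :=
      (by decide : (1 + 1 : ZMod 2) = 0) ▸ SetLike.mul_mem_graded ha hb
    have hι := ι_mem_evenOdd_one Q
    rw [mul_assoc, contractLeft_ι_mul, contractLeft_ι_mul, mul_sub, mul_smul_comm, ← mul_assoc]
    exact sub_mem (Submodule.smul_mem _ _ (odd_mul_odd (hι m₂) hy))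
      (sub_mem (Submodule.smul_mem _ _ (odd_mul_odd (hι m₁) hy))
        (zero_add (0 : ZMod 2) ▸ SetLike.mul_mem_graded (ι_mul_ι_mem_evenOdd_zero Q m₁ m₂) h))

end CliffordAlgebra

namespace ExteriorAlgebra

variable {R M : Type*} [CommRing R] [AddCommGroup M] [Module R M]

local notation "Q₀" => (0 : QuadraticForm R M)

theorem ι_mul_ι_anticomm (a b : M) : ι R a * ι R b = -(ι R b * ι R a) :=
  ι_mul_ι_comm_of_isOrtho (.all a b)

theorem commute_ι_mul_ι (m₁ m₂ : M) (x : ExteriorAlgebra R M) :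
    Commute (ι R m₁ * ι R m₂) x := by
  induction x using CliffordAlgebra.induction with
  | algebraMap r => exact Algebra.commute_algebraMap_right r _
  | ι m =>
    calc ι R m₁ * ι R m₂ * ι R m = ι R m₁ * -(ι R m * ι R m₂) := by
          rw [mul_assoc, ι_mul_ι_anticomm m₂]
      _ = ι R m * (ι R m₁ * ι R m₂) := by
          rw [mul_neg, ← mul_assoc, ι_mul_ι_anticomm m₁, neg_mul, neg_neg, mul_assoc]
  | mul x y hx hy => exact hx.mul_right hy
  | add x y hx hy => exact hx.add_right hy

theorem commute_of_mem_evenOdd_zero {a : ExteriorAlgebra R M} (ha : a ∈ evenOdd Q₀ 0)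
    (x : ExteriorAlgebra R M) : Commute a x := by
  induction a, ha using even_induction with
  | algebraMap r => exact Algebra.commute_algebraMap_left r x
  | add _ _ _ _ h₁ h₂ => exact h₁.add_left h₂
  | ι_mul_ι_mul m₁ m₂ _ _ h => exact (commute_ι_mul_ι m₁ m₂ x).mul_left h

theorem ι_mul_anticomm_of_mem_evenOdd_one (m : M) {w : ExteriorAlgebra R M}
    (hw : w ∈ evenOdd Q₀ 1) : ι R m * w = -(w * ι R m) := by
  induction w, hw using odd_induction with
  | ι v => exact ι_mul_ι_anticomm m v
  | add _ _ _ _ h₁ h₂ => rw [mul_add, add_mul, h₁, h₂, neg_add]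
  | ι_mul_ι_mul m₁ m₂ y _ h =>
    rw [← mul_assoc, ← (commute_ι_mul_ι m₁ m₂ (ι R m)).eq, mul_assoc, h, mul_neg]
    simp only [mul_assoc]

theorem mul_anticomm_of_mem_evenOdd_one {v w : ExteriorAlgebra R M} (hv : v ∈ evenOdd Q₀ 1)
    (hw : w ∈ evenOdd Q₀ 1) : v * w = -(w * v) := by
  induction v, hv using odd_induction with
  | ι m => exact ι_mul_anticomm_of_mem_evenOdd_one m hw
  | add _ _ _ _ h₁ h₂ => rw [mul_add, add_mul, h₁, h₂, neg_add]
  | ι_mul_ι_mul m₁ m₂ y _ h =>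
    rw [mul_assoc, h, mul_neg, ← mul_assoc, (commute_ι_mul_ι m₁ m₂ w).eq, mul_assoc]

theorem lie_mulLeft_comp_contractLeft_mulLeft (d : Module.Dual R M) {v w : ExteriorAlgebra R M}
    (hv : v ∈ evenOdd Q₀ 1) (hw : w ∈ evenOdd Q₀ 1) :
    ⁅LinearMap.mulLeft R v ∘ₗ contractLeft d, LinearMap.mulLeft R w⁆ =
      LinearMap.mulLeft R (v * contractLeft d w) := by
  refine LinearMap.ext fun x => ?_
  simp only [Ring.lie_def, LinearMap.sub_apply, Module.End.mul_apply, LinearMap.comp_apply,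
    LinearMap.mulLeft_apply, contractLeft_mul_of_mem_evenOdd_one d hw, mul_sub, ← mul_assoc,
    mul_anticomm_of_mem_evenOdd_one hv hw]
  noncomm_ring

end ExteriorAlgebra

section Forms

open MvPolynomial

variable {n : ℕ}

local notation "Q₀" => (0 : QuadraticForm ℝ (Fin n → ℝ))

def lieDerGrassmann (V : Fin n → Lam n) : Module.End ℝ (Forms n) :=
  ∑ α : Fin n, TensorProduct.map LinearMap.id (LinearMap.mulLeft ℝ (V α) ∘ₗ pd α)

def lieDerFiber (V : Fin n → Lam n) : Module.End ℝ (Forms n) :=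
  ∑ α : Fin n, ∑ β : Fin n, TensorProduct.map
    (LinearMap.mulLeft ℝ (X β) ∘ₗ (pderiv α).toLinearMap) (LinearMap.mulLeft ℝ (pd β (V α)))

theorem lieDerEven_eq_add (V : Fin n → Lam n) :
    lieDerEven V = lieDerGrassmann V + lieDerFiber V := rfl

theorem innerProd_sum {ι : Type*} (s : Finset ι) (U : ι → Fin n → Lam n) :
    innerProd (fun γ => ∑ i ∈ s, U i γ) = ∑ i ∈ s, innerProd (U i) := by
  refine TensorProduct.ext' fun p x => ?_
  simp [innerProd, Finset.sum_mul, tmul_sum, Finset.sum_comm (s := s)]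

theorem innerProd_sub (U U' : Fin n → Lam n) :
    innerProd (fun γ => U γ - U' γ) = innerProd U - innerProd U' := by
  refine TensorProduct.ext' fun p x => ?_
  simp [innerProd, sub_mul, tmul_sub]

theorem lie_lieDerGrassmann_innerProd {V W : Fin n → Lam n} (hV : ∀ α, V α ∈ evenOdd Q₀ 1)
    (hW : ∀ α, W α ∈ evenOdd Q₀ 1) :
    ⁅lieDerGrassmann V, innerProd W⁆ = innerProd (fun γ => ∑ β, V β * pd β (W γ)) := by
  rw [innerProd_sum]
  -- `A` has to be given: sums in `Module.End ℝ (Forms n)` use the additive structure coming from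
  -- `TensorProduct.addCommMonoid`, which is not unified against a `Ring` on a metavariable.
  simp only [lieDerGrassmann, innerProd, Ring.sum_lie (A := Module.End ℝ (Forms n)),
    Ring.lie_sum (A := Module.End ℝ (Forms n))]
  refine Finset.sum_congr rfl fun β _ => Finset.sum_congr rfl fun γ _ => ?_
  rw [← Module.End.one_eq_id, lie_map_map_of_commute_left (Commute.one_left _), pd,
    ExteriorAlgebra.lie_mulLeft_comp_contractLeft_mulLeft _ (hV β) (hW γ), one_mul]

theorem lie_map_mulLeft_X_comp_pderiv_innerProd (α β : Fin n) {a : Lam n}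
    (ha : a ∈ evenOdd Q₀ 0) (W : Fin n → Lam n) :
    ⁅map (LinearMap.mulLeft ℝ (X β) ∘ₗ (pderiv α).toLinearMap) (LinearMap.mulLeft ℝ a),
        innerProd W⁆ = -map (pderiv α).toLinearMap (LinearMap.mulLeft ℝ (W β * a)) := by
  have hcomm (w : Lam n) : Commute (LinearMap.mulLeft ℝ a) (LinearMap.mulLeft ℝ w) :=
    (ExteriorAlgebra.commute_of_mem_evenOdd_zero ha w).map (NonUnitalAlgHom.lmul ℝ (Lam n))
  simp only [innerProd, Ring.lie_sum (A := Module.End ℝ (Forms n)),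
    lie_map_map_of_commute_right _ _ (hcomm _), lie_mulLeft_X_comp_pderiv_pderiv]
  rw [Finset.sum_eq_single β (fun γ _ hγ => by rw [if_neg hγ, map_zero_left]) (by simp),
    if_pos rfl, (hcomm (W β)).eq]
  exact TensorProduct.ext' fun p x => by simp [TensorProduct.neg_tmul]

theorem lie_lieDerFiber_innerProd {V : Fin n → Lam n} (hV : ∀ α, V α ∈ evenOdd Q₀ 1)
    (W : Fin n → Lam n) :
    ⁅lieDerFiber V, innerProd W⁆ = -innerProd (fun γ => ∑ β, W β * pd β (V γ)) := by
  rw [innerProd_sum]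
  simp only [lieDerFiber, Ring.sum_lie (A := Module.End ℝ (Forms n)), pd,
    lie_map_mulLeft_X_comp_pderiv_innerProd _ _ (contractLeft_mem_evenOdd_zero _ (hV _))]
  rw [Finset.sum_comm]
  simp only [innerProd, Finset.sum_neg_distrib (G := Module.End ℝ (Forms n))]

end Forms

theorem lieDer_innerProd_commutator_general (n : ℕ) (V W : Fin n → Lam n)
    (hV : ∀ α, V α ∈ CliffordAlgebra.evenOdd (0 : QuadraticForm ℝ (Fin n → ℝ)) 1)
    (hW : ∀ α, W α ∈ CliffordAlgebra.evenOdd (0 : QuadraticForm ℝ (Fin n → ℝ)) 1) :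
    lieDerEven V ∘ₗ innerProd W - innerProd W ∘ₗ lieDerEven V =
      innerProd (fun γ => ∑ β : Fin n, (V β * pd β (W γ) - W β * pd β (V γ))) := by
  calc lieDerEven V ∘ₗ innerProd W - innerProd W ∘ₗ lieDerEven V
      = ⁅lieDerGrassmann V, innerProd W⁆ + ⁅lieDerFiber V, innerProd W⁆ := by
        rw [← Ring.add_lie, ← lieDerEven_eq_add]
        rfl
    _ = innerProd (fun γ => ∑ β, V β * pd β (W γ)) -
          innerProd (fun γ => ∑ β, W β * pd β (V γ)) := by
        rw [lie_lieDerGrassmann_innerProd hV hW, lie_lieDerFiber_innerProd hV]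
        exact (sub_eq_add_neg (G := Module.End ℝ (Forms n)) _ _).symm
    _ = _ := by simp only [Finset.sum_sub_distrib, innerProd_sub]

/-- The Lie derivative acts on inner products by the commutator: for even vector fields
`V, W` (all components odd in `Λ`) and the commutator field
`U γ = Σ_β (V β * ∂_β(W γ) - W β * ∂_β(V γ))`, one has `V^↑ ∘ W_↑ - W_↑ ∘ V^↑ = U_↑`. -/
theorem lieDer_innerProd_commutator (n : ℕ) (hn : 1 ≤ n) (V W : Fin n → Lam n)
    (hV : ∀ α, V α ∈ CliffordAlgebra.evenOdd (0 : QuadraticForm ℝ (Fin n → ℝ)) 1)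
    (hW : ∀ α, W α ∈ CliffordAlgebra.evenOdd (0 : QuadraticForm ℝ (Fin n → ℝ)) 1) :
    lieDerEven V ∘ₗ innerProd W - innerProd W ∘ₗ lieDerEven V =
      innerProd (fun γ => ∑ β : Fin n, (V β * pd β (W γ) - W β * pd β (V γ))) :=
  lieDer_innerProd_commutator_general n V W hV hW
end
end

section
/- The Hodge star transform associated with a constant odd metric is an involution: let n ≥ 1 and let g be a real (2n)×(2n) matrix with gᵀ = -g and det g ≠ 0. For a Schwartz function f : (Fin (2n) → ℝ) → ℂ define (S f)(y) := (2π)^(-n) · √|det g| · ∫ f(z) · exp( -i ⟨z, g·y⟩ ) dz, the integral taken with respect to Lebesgue measure on Fin (2n) → ℝ, where ⟨·,·⟩ is the Euclidean inner product and g·y is the matrix-vector product. Then the defining integral of S(Sf) converges and S(S f)(y) = f(y) for every y. -/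
/-!
With the Fourier kernel `exp (-2πi⟪x, ξ⟫)` one has `S f (y) = c · 𝓕 f (g y / 2π)`, where
`c = (2π)^{-n} √|det g|`. Skew-symmetry turns the kernel `exp (-i⟪z, g y⟫)` of the outer
transform into `exp (2πi⟪g z / 2π, y⟫)`, the kernel of `𝓕⁻`. The substitution `w = g z / 2π`,
of Jacobian `(2π)^{-2n} |det g|`, then gives `S (S f) (y) = c² (2π)^{2n} |det g|⁻¹ 𝓕⁻ (𝓕 f) (y)`,
which is `f y` by Fourier inversion.
-/

open MeasureTheory

noncomputable section

/-- The scalar content of the Hodge star operator `*_g` on `ℝ^{0|2n}`: the Fourier-type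
transform `(S f)(y) = (2π)^{-n} √|det g| ∫ f(z) exp(-i ⟨z, g·y⟩) dz` in the even fiber
variables, for a constant odd (skew-symmetric) metric `g`. -/
def hodgeTransform {n : ℕ} (g : Matrix (Fin (2 * n)) (Fin (2 * n)) ℝ)
    (f : (Fin (2 * n) → ℝ) → ℂ) : (Fin (2 * n) → ℝ) → ℂ := fun y =>
  ((2 * Real.pi) ^ n)⁻¹ * (Real.sqrt |g.det| : ℝ) *
    ∫ z : Fin (2 * n) → ℝ,
      f z * Complex.exp (-Complex.I * ((∑ i, z i * g.mulVec y i : ℝ) : ℂ))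

open FourierTransform Real
open scoped RealInnerProductSpace

section ChangeOfVariables

variable {E F : Type*} [NormedAddCommGroup E] [NormedSpace ℝ E] [MeasurableSpace E]
  [BorelSpace E] [FiniteDimensional ℝ E] [NormedAddCommGroup F]
  (μ : Measure E) [μ.IsAddHaarMeasure] {L : E →ₗ[ℝ] E}

theorem integral_comp_linearMap_of_det_ne_zero [NormedSpace ℝ F] (hL : LinearMap.det L ≠ 0)
    (h : E → F) : ∫ v, h (L v) ∂μ = |LinearMap.det L|⁻¹ • ∫ w, h w ∂μ := by
  let e := (L.equivOfDetNeZero hL).toContinuousLinearEquiv.toHomeomorph.toMeasurableEquiv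
  change ∫ v, h (e v) ∂μ = _
  rw [← integral_map_equiv e h]
  change ∫ w, h w ∂(Measure.map L μ) = _
  rw [Measure.map_linearMap_addHaar_eq_smul_addHaar μ hL, integral_smul_measure,
    ENNReal.toReal_ofReal (abs_nonneg _), abs_inv]

theorem MeasureTheory.Integrable.comp_linearMap_of_det_ne_zero (hL : LinearMap.det L ≠ 0)
    {h : E → F} (hh : Integrable h μ) : Integrable (fun v => h (L v)) μ := by
  let e := (L.equivOfDetNeZero hL).toContinuousLinearEquiv.toHomeomorph.toMeasurableEquiv
  refine (integrable_map_equiv e h).1 ?_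
  change Integrable h (Measure.map L μ)
  rw [Measure.map_linearMap_addHaar_eq_smul_addHaar μ hL]
  exact hh.smul_measure ENNReal.ofReal_ne_top

end ChangeOfVariables

section EuclideanSpace

variable {ι : Type*} [Fintype ι] {F : Type*} [NormedAddCommGroup F]

theorem integral_comp_ofLp [NormedSpace ℝ F] (h : (ι → ℝ) → F) :
    ∫ v : EuclideanSpace ℝ ι, h (WithLp.ofLp v) = ∫ z, h z :=
  (EuclideanSpace.volume_preserving_symm_measurableEquiv_toLp ι).integral_comp' h

theorem integrable_comp_ofLp_iff {h : (ι → ℝ) → F} :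
    Integrable (fun v : EuclideanSpace ℝ ι => h (WithLp.ofLp v)) ↔ Integrable h :=
  (EuclideanSpace.volume_preserving_symm_measurableEquiv_toLp ι).integrable_comp_emb
    (MeasurableEquiv.measurableEmbedding _)

end EuclideanSpace

namespace LinearMap

theorem det_inv_smul {K M : Type*} [Field K] [AddCommGroup M] [Module K M] (c : K)
    (T : M →ₗ[K] M) : (c⁻¹ • T).det = (c ^ Module.finrank K M)⁻¹ * T.det := by
  rw [det_smul, inv_pow]

variable {V : Type*} [NormedAddCommGroup V] [InnerProductSpace ℝ V] [FiniteDimensional ℝ V]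
  [MeasurableSpace V] [BorelSpace V] {T : V →ₗ[ℝ] V} {f : V → ℂ}

def fourierAlong (T : V →ₗ[ℝ] V) (f : V → ℂ) (y : V) : ℂ :=
  ∫ z, f z * Complex.exp (-Complex.I * (⟪z, T y⟫ : ℝ))

theorem fourierAlong_eq_fourier (T : V →ₗ[ℝ] V) (f : V → ℂ) (y : V) :
    T.fourierAlong f y = 𝓕 f (((2 * π)⁻¹ • T) y) := by
  rw [fourierAlong, Real.fourier_eq']
  congr 1 with z
  rw [smul_apply, real_inner_smul_right, smul_eq_mul, mul_comm]
  congr 2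
  push_cast
  field_simp

theorem fourierAlong_const_mul (T : V →ₗ[ℝ] V) (f : V → ℂ) (c : ℂ) (y : V) :
    T.fourierAlong (fun z => c * f z) y = c * T.fourierAlong f y := by
  simp only [fourierAlong, mul_assoc, integral_const_mul]

/-- For skew `T`, the integrand of `T.fourierAlong (T.fourierAlong f) y` is the integrand of
`𝓕⁻ (𝓕 f) y` composed with `(2π)⁻¹ • T`. -/
theorem fourierAlong_mul_exp_eq (hT : adjoint T = -T) (f : V → ℂ) (y z : V) :
    T.fourierAlong f z * Complex.exp (-Complex.I * (⟪z, T y⟫ : ℝ)) =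
      Complex.exp ((2 * π * ⟪((2 * π)⁻¹ • T) z, y⟫ : ℝ) * Complex.I) •
        𝓕 f (((2 * π)⁻¹ • T) z) := by
  have hskew : ⟪z, T y⟫ = -⟪T z, y⟫ := by
    rw [← adjoint_inner_right, hT, neg_apply, inner_neg_right, neg_neg]
  rw [fourierAlong_eq_fourier, hskew, smul_apply, real_inner_smul_left, smul_eq_mul, mul_comm]
  congr 2
  push_cast
  field_simp

theorem integrable_fourierAlong_mul_exp (hT : adjoint T = -T) (hdet : T.det ≠ 0)
    (hf : Integrable (𝓕 f)) (y : V) :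
    Integrable (fun z => T.fourierAlong f z * Complex.exp (-Complex.I * (⟪z, T y⟫ : ℝ))) := by
  have hinv : Integrable (fun w => Complex.exp ((2 * π * ⟪w, y⟫ : ℝ) * Complex.I) • 𝓕 f w) :=
    hf.bdd_mul (c := 1) (by fun_prop) (ae_of_all _ fun w => (Complex.norm_exp_ofReal_mul_I _).le)
  simp_rw [fourierAlong_mul_exp_eq hT]
  exact hinv.comp_linearMap_of_det_ne_zero volume (by rw [det_inv_smul]; positivity)

theorem fourierAlong_fourierAlong (hT : adjoint T = -T) (hdet : T.det ≠ 0)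
    (hf : Integrable f) (hf' : Integrable (𝓕 f)) (hcont : Continuous f) (y : V) :
    T.fourierAlong (T.fourierAlong f) y =
      ((2 * π) ^ Module.finrank ℝ V * |T.det|⁻¹ : ℝ) • f y := by
  calc T.fourierAlong (T.fourierAlong f) y
      = ∫ z, Complex.exp ((2 * π * ⟪((2 * π)⁻¹ • T) z, y⟫ : ℝ) * Complex.I) •
          𝓕 f (((2 * π)⁻¹ • T) z) := by
        rw [fourierAlong]
        congr 1 with z
        exact fourierAlong_mul_exp_eq hT f y z
    _ = |((2 * π)⁻¹ • T).det|⁻¹ • 𝓕⁻ (𝓕 f) y := by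
        rw [integral_comp_linearMap_of_det_ne_zero volume
          (by rw [det_inv_smul]; positivity)
          (fun w => Complex.exp ((2 * π * ⟪w, y⟫ : ℝ) * Complex.I) • 𝓕 f w),
          Real.fourierInv_eq']
    _ = _ := by
        rw [hcont.fourierInv_fourier_eq hf hf', det_inv_smul, abs_mul, abs_inv,
          abs_of_pos (by positivity), mul_inv, inv_inv]

end LinearMap

namespace Matrix

variable {ι : Type*} [Fintype ι] [DecidableEq ι]

theorem det_toEuclideanLin (A : Matrix ι ι ℝ) : LinearMap.det (toEuclideanLin A) = A.det := by
  rw [toEuclideanLin_eq_toLin_orthonormal, LinearMap.det_toLin]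

theorem adjoint_toEuclideanLin (A : Matrix ι ι ℝ) :
    LinearMap.adjoint (toEuclideanLin A) = toEuclideanLin Aᵀ := by
  rw [← toEuclideanLin_conjTranspose_eq_adjoint, conjTranspose_eq_transpose_of_trivial]

theorem inner_toLp_toEuclideanLin_toLp (A : Matrix ι ι ℝ) (x y : ι → ℝ) :
    ⟪WithLp.toLp 2 x, toEuclideanLin A (WithLp.toLp 2 y)⟫ = ∑ i, x i * (A *ᵥ y) i := by
  rw [← coe_toEuclideanCLM_eq_toEuclideanLin]
  exact inner_toEuclideanCLM A _ _

end Matrix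

open LinearMap Matrix

theorem hodgeTransform_eq_fourierAlong {n : ℕ} (g : Matrix (Fin (2 * n)) (Fin (2 * n)) ℝ)
    (f : (Fin (2 * n) → ℝ) → ℂ) (y : Fin (2 * n) → ℝ) :
    hodgeTransform g f y = ((2 * π) ^ n)⁻¹ * (√|g.det| : ℝ) *
      (toEuclideanLin g).fourierAlong (fun v => f (WithLp.ofLp v)) (WithLp.toLp 2 y) := by
  rw [hodgeTransform, fourierAlong, ← integral_comp_ofLp]
  simp_rw [← inner_toLp_toEuclideanLin_toLp]

theorem hodgeTransform_involutive_general {n : ℕ}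
    (g : Matrix (Fin (2 * n)) (Fin (2 * n)) ℝ)
    (hskew : g.transpose = -g) (hdet : g.det ≠ 0)
    (f : SchwartzMap (Fin (2 * n) → ℝ) ℂ) :
    (∀ y : Fin (2 * n) → ℝ, Integrable (fun z : Fin (2 * n) → ℝ =>
        hodgeTransform g (⇑f) z *
          Complex.exp (-Complex.I * ((∑ i, z i * g.mulVec y i : ℝ) : ℂ)))) ∧
    (∀ y : Fin (2 * n) → ℝ, hodgeTransform g (hodgeTransform g ⇑f) y = f y) := by
  set T := toEuclideanLin g
  set c : ℂ := ((2 * π) ^ n)⁻¹ * (√|g.det| : ℝ) with hc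
  let F : SchwartzMap (EuclideanSpace ℝ (Fin (2 * n))) ℂ :=
    SchwartzMap.compCLMOfContinuousLinearEquiv ℝ (EuclideanSpace.equiv (Fin (2 * n)) ℝ) f
  have hT : adjoint T = -T := by rw [adjoint_toEuclideanLin, hskew, map_neg]
  have hTdet : T.det ≠ 0 := by rwa [det_toEuclideanLin]
  have hSf : ∀ v, hodgeTransform g f (WithLp.ofLp v) = c * T.fourierAlong F v := fun v =>
    hodgeTransform_eq_fourierAlong g f _
  refine ⟨fun y => ?_, fun y => ?_⟩
  · rw [← integrable_comp_ofLp_iff]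
    simp_rw [hSf, ← inner_toLp_toEuclideanLin_toLp, WithLp.toLp_ofLp, mul_assoc]
    exact (integrable_fourierAlong_mul_exp hT hTdet (𝓕 F).integrable _).const_mul c
  · have hnorm : (((2 * π) ^ n)⁻¹ * √|g.det|) ^ 2 * ((2 * π) ^ (2 * n) * |g.det|⁻¹) = 1 := by
      rw [mul_pow, inv_pow, Real.sq_sqrt (abs_nonneg _), ← pow_mul, mul_comm n 2]
      field_simp
    calc hodgeTransform g (hodgeTransform g f) y
        = c * (c * (((2 * π) ^ (2 * n) * |g.det|⁻¹ : ℝ) • F (WithLp.toLp 2 y))) := by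
          rw [hodgeTransform_eq_fourierAlong, funext hSf, fourierAlong_const_mul,
            fourierAlong_fourierAlong hT hTdet F.integrable (𝓕 F).integrable F.continuous,
            finrank_euclideanSpace_fin, det_toEuclideanLin]
      _ = ((((2 * π) ^ n)⁻¹ * √|g.det|) ^ 2 * ((2 * π) ^ (2 * n) * |g.det|⁻¹) : ℝ) * f y := by
          rw [Complex.real_smul, show F (WithLp.toLp 2 y) = f y from rfl, hc]
          push_cast
          ring
      _ = f y := by rw [hnorm, Complex.ofReal_one, one_mul]

/-- The Hodge star transform associated with a constant skew-symmetric non-degenerate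
metric is an involution on Schwartz functions: the defining integral of `S (S f)`
converges, and `S (S f) = f`. -/
theorem hodgeTransform_involutive {n : ℕ} (hn : 1 ≤ n)
    (g : Matrix (Fin (2 * n)) (Fin (2 * n)) ℝ)
    (hskew : g.transpose = -g) (hdet : g.det ≠ 0)
    (f : SchwartzMap (Fin (2 * n) → ℝ) ℂ) :
    (∀ y : Fin (2 * n) → ℝ, Integrable (fun z : Fin (2 * n) → ℝ =>
        hodgeTransform g (⇑f) z *
          Complex.exp (-Complex.I * ((∑ i, z i * g.mulVec y i : ℝ) : ℂ)))) ∧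
    (∀ y : Fin (2 * n) → ℝ, hodgeTransform g (hodgeTransform g ⇑f) y = f y) :=
  hodgeTransform_involutive_general g hskew hdet f
end
end

section
/- Existence, uniqueness and the Koszul formula for the Grassmann Levi-Civita connection (algebraic form): let M be a module over a commutative ring R in which 2 is invertible, let m be a natural number, and let h : Fin m → Fin m → Fin m → M satisfy h α β γ = - h β α γ for all indices (skew-symmetry of the metric derivatives (g_{αβ})_{,γ} in α,β). Then there exists a unique Γ : Fin m → Fin m → Fin m → M such that (i) Γ α β γ = - Γ α γ β for all indices (vanishing torsion / antisymmetry of the connection) and (ii) Γ α β γ − Γ β α γ = h α β γ for all indices (metric compatibility); moreover this unique solution is given explicitly by Γ α β γ = (1/2) · ( h α β γ − h α γ β − h β γ α ). -/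
private lemma half_of_two_smul {R : Type*} [CommRing R] [Invertible (2 : R)]
    {M : Type*} [AddCommGroup M] [Module R M] {x y : M}
    (hxy : (2 : R) • x = y) : x = (⅟2 : R) • y := by
  rw [← hxy, smul_smul, invOf_mul_self, one_smul]

/-- Existence, uniqueness, and the Koszul formula for the Grassmann Levi-Civita
connection (algebraic form): given `h α β γ = (g_{αβ})_{,γ}` skew-symmetric in `α, β`,
there is a unique `Γ` (the lowered Christoffel symbols `Γ_{αβγ}`) that is antisymmetric
in its last two indices (vanishing torsion) and satisfies
`Γ α β γ - Γ β α γ = h α β γ` (metric compatibility); moreover it is given by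
`Γ α β γ = ½ (h α β γ - h α γ β - h β γ α)`. -/
theorem grassmann_levi_civita {R : Type*} [CommRing R] [Invertible (2 : R)]
    {M : Type*} [AddCommGroup M] [Module R M] {m : ℕ}
    (h : Fin m → Fin m → Fin m → M)
    (hskew : ∀ α β γ, h α β γ = -h β α γ) :
    (∃! Γ : Fin m → Fin m → Fin m → M,
      (∀ α β γ, Γ α β γ = -Γ α γ β) ∧ (∀ α β γ, Γ α β γ - Γ β α γ = h α β γ)) ∧
    (∀ Γ : Fin m → Fin m → Fin m → M,
      ((∀ α β γ, Γ α β γ = -Γ α γ β) ∧ (∀ α β γ, Γ α β γ - Γ β α γ = h α β γ)) →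
      ∀ α β γ, Γ α β γ = (⅟2 : R) • (h α β γ - h α γ β - h β γ α)) := by
  -- Uniqueness formula: any solution satisfies the Koszul formula.
  have key : ∀ Γ : Fin m → Fin m → Fin m → M,
      ((∀ α β γ, Γ α β γ = -Γ α γ β) ∧ (∀ α β γ, Γ α β γ - Γ β α γ = h α β γ)) →
      ∀ α β γ, Γ α β γ = (⅟2 : R) • (h α β γ - h α γ β - h β γ α) := by
    rintro Γ ⟨ha, hc⟩ α β γ
    apply half_of_two_smul
    have e1 := hc α β γ
    have e2 := hc α γ β
    have e3 := hc β γ α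
    rw [ha α γ β] at e2
    rw [ha β γ α, ha γ β α] at e3
    have : ((2:ℤ) • Γ α β γ : M) = h α β γ - h α γ β - h β γ α := by
      rw [two_zsmul]
      rw [← e1, ← e2, ← e3]
      abel
    rw [two_smul]
    rw [two_zsmul] at this
    exact this
  -- The explicit candidate.
  set Γ₀ : Fin m → Fin m → Fin m → M :=
    fun α β γ => (⅟2 : R) • (h α β γ - h α γ β - h β γ α) with hΓ₀
  have prop : (∀ α β γ, Γ₀ α β γ = -Γ₀ α γ β) ∧
      (∀ α β γ, Γ₀ α β γ - Γ₀ β α γ = h α β γ) := by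
    constructor
    · intro α β γ
      rw [hΓ₀]
      simp only
      rw [← smul_neg]
      congr 1
      rw [hskew γ β α]
      abel
    · intro α β γ
      rw [hΓ₀]
      simp only
      rw [← smul_sub]
      have : h α β γ - h α γ β - h β γ α - (h β α γ - h β γ α - h α γ β)
          = h α β γ + h α β γ := by
        rw [hskew β α γ]; abel
      rw [this, ← two_smul R, smul_smul, invOf_mul_self, one_smul]
  refine ⟨⟨Γ₀, prop, ?_⟩, key⟩
  intro Γ hΓ
  funext α β γ
  exact key Γ hΓ α β γ
end

section
/- Odd graded skew-symmetry of the metric pairing: let Λ := ExteriorAlgebra ℝ (Fin m → ℝ), let g : Fin m → Fin m → Λ have all values g α β in the even part of Λ with g α β = - g β α, and let v, w : Fin m → Λ have all components homogeneous, every v α of Grassmann parity p and every w α of Grassmann parity q. Then Σ_{α,β} v α * g α β * w β = - (-1)^(p·q) · Σ_{α,β} w α * g α β * v β. -/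
open CliffordAlgebra

section Aux

variable {R M : Type*} [CommRing R] [AddCommGroup M] [Module R M]

local notation "Q0" => (0 : QuadraticForm R M)

private lemma aux_iota_swap (a b : M) :
    ι Q0 a * ι Q0 b = -(ι Q0 b * ι Q0 a) :=
  ι_mul_ι_comm_of_isOrtho (by simp [QuadraticMap.IsOrtho])

private lemma aux_pair_swap (m₁ m₂ y : M) :
    ι Q0 m₁ * ι Q0 m₂ * ι Q0 y = ι Q0 y * (ι Q0 m₁ * ι Q0 m₂) := by
  rw [mul_assoc, aux_iota_swap m₂ y, mul_neg, ← mul_assoc, aux_iota_swap m₁ y,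
    neg_mul, neg_neg, mul_assoc]

/-- Homogeneous element times a vector. -/
private lemma aux_mul_iota {p : ZMod 2} {a : CliffordAlgebra Q0}
    (ha : a ∈ evenOdd Q0 p) (y : M) :
    a * ι Q0 y = (-1 : R) ^ p.val • (ι Q0 y * a) := by
  rcases (show p = 0 ∨ p = 1 by fin_cases p; exacts [Or.inl rfl, Or.inr rfl]) with rfl | rfl
  · rw [show (0 : ZMod 2).val = 0 from rfl, pow_zero, one_smul]
    induction a, ha using even_induction with
    | algebraMap r => rw [Algebra.commutes]
    | add x y hx hy ihx ihy => rw [add_mul, mul_add, ihx, ihy]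
    | ι_mul_ι_mul m₁ m₂ x hx ih =>
      rw [mul_assoc, ih, ← mul_assoc, aux_pair_swap, mul_assoc]
  · rw [show (1 : ZMod 2).val = 1 from rfl, pow_one]
    induction a, ha using odd_induction with
    | ι v => rw [aux_iota_swap v y, neg_one_smul]
    | add x y hx hy ihx ihy =>
      rw [add_mul, mul_add, ihx, ihy, smul_add]
    | ι_mul_ι_mul m₁ m₂ x hx ih =>
      rw [mul_assoc, ih, mul_smul_comm, ← mul_assoc, aux_pair_swap, mul_assoc, mul_assoc]

private lemma aux_mul_pair {p : ZMod 2} {a : CliffordAlgebra Q0}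
    (ha : a ∈ evenOdd Q0 p) (m₁ m₂ : M) :
    a * (ι Q0 m₁ * ι Q0 m₂) = ι Q0 m₁ * ι Q0 m₂ * a := by
  rw [← mul_assoc, aux_mul_iota ha, smul_mul_assoc, mul_assoc, aux_mul_iota ha,
    mul_smul_comm, smul_smul, ← pow_add, ← two_mul, pow_mul, neg_one_sq, one_pow,
    one_smul, mul_assoc]

/-- Graded commutation in the exterior algebra. -/
private lemma aux_supercomm {p q : ZMod 2} {a b : CliffordAlgebra Q0}
    (ha : a ∈ evenOdd Q0 p) (hb : b ∈ evenOdd Q0 q) :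
    a * b = (-1 : R) ^ (p * q).val • (b * a) := by
  rcases (show q = 0 ∨ q = 1 by fin_cases q; exacts [Or.inl rfl, Or.inr rfl]) with rfl | rfl
  · rw [mul_zero,
      show (0 : ZMod 2).val = 0 from rfl, pow_zero, one_smul]
    induction b, hb using even_induction with
    | algebraMap r => rw [Algebra.commutes]
    | add x y hx hy ihx ihy => rw [add_mul, mul_add, ihx, ihy]
    | ι_mul_ι_mul m₁ m₂ x hx ih =>
      rw [← mul_assoc, aux_mul_pair ha, mul_assoc, ih, ← mul_assoc]
  · rw [mul_one]
    induction b, hb using odd_induction with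
    | ι v => exact aux_mul_iota ha v
    | add x y hx hy ihx ihy => rw [add_mul, mul_add, ihx, ihy, smul_add]
    | ι_mul_ι_mul m₁ m₂ x hx ih =>
      rw [← mul_assoc, aux_mul_pair ha, mul_assoc, ih, mul_smul_comm, ← mul_assoc]

end Aux

/-- Odd graded skew-symmetry of the metric pairing on `ℝ^{0|m}`: for an even
antisymmetric Grassmann metric `g` and vector fields `v, w` whose components are
homogeneous of Grassmann element parities `p` and `q`,
`Σ v^α g_{αβ} w^β = -(-1)^(p q) Σ w^α g_{αβ} v^β`. -/
theorem metric_pairing_graded_skew (m : ℕ)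
    (g : Fin m → Fin m → ExteriorAlgebra ℝ (Fin m → ℝ))
    (hgeven : ∀ α β, g α β ∈ CliffordAlgebra.evenOdd (0 : QuadraticForm ℝ (Fin m → ℝ)) 0)
    (hgskew : ∀ α β, g α β = -g β α)
    (p q : ZMod 2) (v w : Fin m → ExteriorAlgebra ℝ (Fin m → ℝ))
    (hv : ∀ α, v α ∈ CliffordAlgebra.evenOdd (0 : QuadraticForm ℝ (Fin m → ℝ)) p)
    (hw : ∀ α, w α ∈ CliffordAlgebra.evenOdd (0 : QuadraticForm ℝ (Fin m → ℝ)) q) :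
    ∑ α : Fin m, ∑ β : Fin m, v α * g α β * w β =
      -((-1 : ℝ) ^ (p * q).val • ∑ α : Fin m, ∑ β : Fin m, w α * g α β * v β) := by
  rw [Finset.sum_comm (s := Finset.univ) (t := Finset.univ)
    (f := fun α β => w α * g α β * v β)]
  rw [← neg_smul, Finset.smul_sum]
  refine Finset.sum_congr rfl fun α _ => ?_
  rw [Finset.smul_sum]
  refine Finset.sum_congr rfl fun β _ => ?_
  -- goal: v α * g α β * w β = (-(-1)^(p*q).val) • (w β * g β α * v α)
  have h1 : v α * g β α = g β α * v α := by
    simpa using aux_supercomm (hv α) (hgeven β α)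
  have h2 : v α * w β = (-1 : ℝ) ^ (p * q).val • (w β * v α) :=
    aux_supercomm (hv α) (hw β)
  have h3 : g β α * w β = w β * g β α := by
    simpa using aux_supercomm (hgeven β α) (hw β)
  calc v α * g α β * w β
      = -(v α * g β α * w β) := by rw [hgskew α β, mul_neg, neg_mul]
    _ = -(v α * (g β α * w β)) := by rw [mul_assoc]
    _ = -(v α * (w β * g β α)) := by rw [h3]
    _ = -((v α * w β) * g β α) := by rw [mul_assoc]
    _ = -((-1 : ℝ) ^ (p * q).val • (w β * v α) * g β α) := by rw [h2]
    _ = (-(-1 : ℝ) ^ (p * q).val) • (w β * g β α * v α) := by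
        rw [smul_mul_assoc, mul_assoc, mul_assoc]
        have : v α * g β α = g β α * v α := h1
        rw [← mul_assoc (w β), ← h1, mul_assoc, neg_smul]
end
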